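/- Let 0 → M₁ → M₂ → π → M₃ → 0 be a short exact sequence of ℤΓ-modules where π is H⁰-surjective and M₃ is permutation projective. Then the sequence splits. -/

import Mathlib

/-!
A map out of a permutation module `ℤ[X]` is the same as an equivariant map `X → M₃`. On an orbit
`Γ • x` such a map is determined by the image of `x`, which is fixed by the stabilizer of `x`;
`H⁰`-surjectivity lifts it to a stabilizer-fixed element of `M₂`, which then extends equivariantly
over the orbit. So `π` has the lifting property against permutation modules, hence against their
direct summands, and lifting `𝟙 M₃` gives the splitting.
-/

open CategoryTheory CategoryTheory.Limits groupCohomology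

/-- A permutation `ℤΓ`-module: one isomorphic to `ℤ[X]` for some `Γ`-set `X`. -/
def IsPermutationModule {Γ : Type} [Group Γ] (F : Rep ℤ Γ) : Prop :=
  ∃ (X : Type) (_ : MulAction Γ X), Nonempty (F ≅ Rep.ofMulAction ℤ Γ X)

/-- A permutation projective module: a direct summand of a permutation module. -/
def IsPermutationProjective {Γ : Type} [Group Γ] (M : Rep ℤ Γ) : Prop :=
  ∃ F : Rep ℤ Γ, IsPermutationModule F ∧ ∃ (i : M ⟶ F) (r : F ⟶ M), i ≫ r = 𝟙 M

/-- A coflasque module: `ℤ`-free with vanishing `H¹(Γ', M)` for all subgroups `Γ' ≤ Γ`. -/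
def IsCoflasque {Γ : Type} [Group Γ] (M : Rep ℤ Γ) : Prop :=
  (@Module.Free ℤ M.V _ _ M.hV2) ∧
    ∀ Γ' : Subgroup Γ,
      Subsingleton (H1 ((Rep.resFunctor Γ'.subtype).obj M))

/-- A permutation presentation of `M`: an exact sequence `0 → F → F → M → 0`
with `F` a permutation module. -/
def HasPermutationPresentation {Γ : Type} [Group Γ] (M : Rep ℤ Γ) : Prop :=
  ∃ (F : Rep ℤ Γ) (_ : IsPermutationModule F) (f : F ⟶ F) (π : F ⟶ M),
    Function.Injective f.hom ∧ Function.Surjective π.hom ∧ Function.Exact f.hom π.hom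

/-- `π` is `H⁰`-surjective if it is surjective on `Γ'`-invariants for every subgroup `Γ'`. -/
def IsH0Surjective {Γ : Type} [Group Γ] {M N : Rep ℤ Γ} (π : M ⟶ N) : Prop :=
  ∀ Γ' : Subgroup Γ, ∀ n : N, (∀ γ : Γ', N.ρ ↑γ n = n) →
    ∃ m : M, (∀ γ : Γ', M.ρ ↑γ m = m) ∧ π.hom m = n

namespace Rep

variable {k G H : Type*} [Ring k] [Monoid G] [MulAction G H]

lemma ofMulAction_hom_ext {A : Rep k G} {φ ψ : ofMulAction k G H ⟶ A}
    (h : ∀ x : H, φ.hom (.single x 1) = ψ.hom (.single x 1)) : φ = ψ := by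
  ext1
  apply Representation.IntertwiningMap.toLinearMap_injective
  exact MonoidAlgebra.lhom_ext' fun x => LinearMap.ext_ring (h x)

noncomputable def ofMulActionLift (A : Rep k G) (f : H → A)
    (hf : ∀ (g : G) (x : H), f (g • x) = A.ρ g (f x)) : ofMulAction k G H ⟶ A :=
  ofHom
    { toLinearMap := Finsupp.linearCombination k f ∘ₗ
        (MonoidAlgebra.coeffLinearEquiv k).toLinearMap
      isIntertwining' g := by
        refine MonoidAlgebra.lhom_ext' fun x => LinearMap.ext_ring ?_
        simp [Representation.ofMulAction_single, hf] }

@[simp]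
lemma ofMulActionLift_single (A : Rep k G) (f : H → A)
    (hf : ∀ (g : G) (x : H), f (g • x) = A.ρ g (f x)) (x : H) :
    (ofMulActionLift A f hf).hom (.single x 1) = f x := by
  simp [ofMulActionLift]

end Rep

section

open MulAction

variable {Γ : Type} {X : Type*} [Group Γ] [MulAction Γ X]

lemma MulAction.exists_smul_mk_out_eq (x : X) :
    ∃ γ : Γ, γ • (⟦x⟧ : orbitRel.Quotient Γ X).out = x := by
  obtain ⟨γ, hγ⟩ := Quotient.mk_out (s := orbitRel Γ X) x
  exact ⟨γ⁻¹, by rw [← hγ, inv_smul_smul]⟩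

lemma Rep.ρ_eq_of_smul_eq {k : Type*} [Ring k] (M : Rep k Γ) {x : X} {m : M}
    (hm : ∀ γ : stabilizer Γ x, M.ρ γ m = m) {γ δ : Γ} (h : γ • x = δ • x) :
    M.ρ γ m = M.ρ δ m := by
  have hstab : δ⁻¹ * γ ∈ stabilizer Γ x := by
    rw [mem_stabilizer_iff, mul_smul, h, inv_smul_smul]
  calc M.ρ γ m = M.ρ δ (M.ρ (δ⁻¹ * γ) m) := by
        rw [← Module.End.mul_apply, ← map_mul, mul_inv_cancel_left]
    _ = M.ρ δ m := by rw [hm ⟨_, hstab⟩]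

theorem IsH0Surjective.exists_equivariant_lift {M N : Rep ℤ Γ} {π : M ⟶ N}
    (hπ : IsH0Surjective π) (f : X → N) (hf : ∀ (γ : Γ) (x : X), f (γ • x) = N.ρ γ (f x)) :
    ∃ g : X → M, (∀ (γ : Γ) (x : X), g (γ • x) = M.ρ γ (g x)) ∧ ∀ x, π.hom (g x) = f x := by
  have hfix (q : orbitRel.Quotient Γ X) (γ : stabilizer Γ q.out) :
      N.ρ γ (f q.out) = f q.out := by
    rw [← hf, γ.2]
  choose m hm_fix hm_lift using fun q => hπ _ _ (hfix q)
  choose γ hγ using exists_smul_mk_out_eq (Γ := Γ) (X := X)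
  refine ⟨fun x => M.ρ (γ x) (m ⟦x⟧), fun δ x => ?_, fun x => ?_⟩
  · simp only [orbitRel.Quotient.quotient_smul_eq]
    calc M.ρ (γ (δ • x)) (m ⟦x⟧) = M.ρ (δ * γ x) (m ⟦x⟧) :=
          M.ρ_eq_of_smul_eq (hm_fix _) (by rw [mul_smul, hγ]; simpa using hγ (δ • x))
      _ = M.ρ δ (M.ρ (γ x) (m ⟦x⟧)) := by rw [map_mul]; rfl
  · rw [Rep.hom_comm_apply, hm_lift, ← hf, hγ]

theorem IsH0Surjective.exists_lift_of_ofMulAction {M N : Rep ℤ Γ} {π : M ⟶ N}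
    (hπ : IsH0Surjective π) (φ : Rep.ofMulAction ℤ Γ X ⟶ N) : ∃ t, t ≫ π = φ := by
  obtain ⟨g, hg, hgφ⟩ := hπ.exists_equivariant_lift (fun x => φ.hom (.single x 1))
    fun γ x => by rw [← Rep.hom_comm_apply, Representation.ofMulAction_single]
  exact ⟨Rep.ofMulActionLift M g hg, Rep.ofMulAction_hom_ext fun x =>
    (congrArg π.hom (Rep.ofMulActionLift_single M g hg x)).trans (hgφ x)⟩

end

theorem splits_of_isH0Surjective_of_permutation_projective_general (Γ : Type) [Group Γ]
    (M₂ M₃ : Rep ℤ Γ) (π : M₂ ⟶ M₃) (hH0 : IsH0Surjective π)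
    (h₃ : IsPermutationProjective M₃) :
    ∃ s : M₃ ⟶ M₂, s ≫ π = 𝟙 M₃ := by
  obtain ⟨F, ⟨X, _, ⟨e⟩⟩, ι, r, hιr⟩ := h₃
  obtain ⟨t, ht⟩ := hH0.exists_lift_of_ofMulAction (e.inv ≫ r)
  exact ⟨ι ≫ e.hom ≫ t, by simp [ht, hιr]⟩

theorem splits_of_isH0Surjective_of_permutation_projective (Γ : Type) [Group Γ]
    [Finite Γ] (M₁ M₂ M₃ : Rep ℤ Γ) (i : M₁ ⟶ M₂) (π : M₂ ⟶ M₃)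
    (hi : Function.Injective i.hom) (hπ : Function.Surjective π.hom)
    (hex : Function.Exact i.hom π.hom) (hH0 : IsH0Surjective π)
    (h₃ : IsPermutationProjective M₃) :
    ∃ s : M₃ ⟶ M₂, s ≫ π = 𝟙 M₃ :=
  splits_of_isH0Surjective_of_permutation_projective_general Γ M₂ M₃ π hH0 h₃
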